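/- For Λ > 0 define the operator H_Λ on Schwartz functions on ℝ by (H_Λ ψ)(x) = −d/dx[ (Λ² − x²) ψ′(x) ] + (2πΛx)² ψ(x). Then H_Λ commutes with the Fourier transform: F(H_Λ ψ) = H_Λ(F ψ) for every Schwartz function ψ. -/

import Mathlib

open Real

/-- The prolate spheroidal differential operator
`(H_Λ ψ)(x) = −d/dx[(Λ² − x²) ψ′(x)] + (2πΛx)² ψ(x)` (Section VIII of Connes' paper). -/
noncomputable def prolate (Λ : ℝ) (g : ℝ → ℂ) (x : ℝ) : ℂ :=
  -deriv (fun t : ℝ => (((Λ ^ 2 - t ^ 2 : ℝ)) : ℂ) * deriv g t) x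
    + (((2 * Real.pi * Λ * x) ^ 2 : ℝ) : ℂ) * g x

open MeasureTheory Complex SchwartzMap FourierTransform

noncomputable def SX : 𝓢(ℝ, ℂ) →L[ℝ] 𝓢(ℝ, ℂ) :=
  bilinLeftCLM (ContinuousLinearMap.mul ℝ ℂ) Complex.ofRealCLM.hasTemperateGrowth

lemma SX_apply (f : 𝓢(ℝ, ℂ)) (x : ℝ) : SX f x = f x * x := rfl

noncomputable abbrev SD : 𝓢(ℝ, ℂ) →L[ℂ] 𝓢(ℝ, ℂ) := SchwartzMap.derivCLM ℂ ℂ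
noncomputable abbrev SF : 𝓢(ℝ, ℂ) →L[ℂ] 𝓢(ℝ, ℂ) := SchwartzMap.fourierTransformCLM ℂ

lemma SD_coe (f : 𝓢(ℝ, ℂ)) : ⇑(SD f) = deriv ⇑f := rfl
lemma SF_coe (f : 𝓢(ℝ, ℂ)) : ⇑(SF f) = FourierTransform.fourier ⇑f := rfl

lemma SX_smul (c : ℂ) (f : 𝓢(ℝ, ℂ)) : SX (c • f) = c • SX f := by
  ext x
  simp only [SX_apply, SchwartzMap.smul_apply, smul_eq_mul]
  ring

lemma SX_coe (f : 𝓢(ℝ, ℂ)) : ⇑(SX f) = fun x : ℝ => x • f x := by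
  ext x; simp [SX_apply, real_smul, mul_comm]

lemma fourier_const_smul (c : ℂ) (h : ℝ → ℂ) (x : ℝ) :
    FourierTransform.fourier (fun y => c * h y) x = c * FourierTransform.fourier h x := by
  simp only [Real.fourier_real_eq]
  rw [← MeasureTheory.integral_const_mul]
  congr 1 with y
  simp [Circle.smul_def]
  ring

lemma SL1 (g : 𝓢(ℝ, ℂ)) : SF (SD g) = (2 * π * I) • SX (SF g) := by
  ext x
  have h := Real.fourier_deriv g.integrable g.differentiable (SD g).integrable
  have hx : SF (SD g) x = FourierTransform.fourier (deriv ⇑g) x := rfl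
  rw [hx, h]
  simp only [SchwartzMap.smul_apply, SX_apply, smul_eq_mul, SF_coe]
  ring

lemma SL2' (g : 𝓢(ℝ, ℂ)) : SD (SF g) = (-(2 * π * I)) • SF (SX g) := by
  ext x
  have hint : Integrable (fun x : ℝ => x • g x) := by
    rw [← SX_coe]; exact (SX g).integrable
  have h := Real.deriv_fourier g.integrable hint
  have hx : SD (SF g) x = deriv (FourierTransform.fourier ⇑g) x := rfl
  rw [hx, h]
  have e : (fun x : ℝ => (-2 * π * I * x) • g x) = fun y => (-(2 * π * I)) * (SX g y) := by
    ext y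
    simp only [SX_apply, smul_eq_mul]
    ring
  rw [e, fourier_const_smul]
  simp only [SchwartzMap.smul_apply, SF_coe, smul_eq_mul]

lemma two_pi_I_ne : (2 * (π : ℂ) * I) ≠ 0 := by
  simp [Real.pi_ne_zero, Complex.I_ne_zero, Complex.ext_iff]

lemma SL2 (g : 𝓢(ℝ, ℂ)) : SF (SX g) = (-(2 * π * I))⁻¹ • SD (SF g) := by
  rw [SL2', inv_smul_smul₀ (neg_ne_zero.mpr two_pi_I_ne)]

lemma hasDerivAt_coe (x : ℝ) : HasDerivAt (fun t : ℝ => (t : ℂ)) 1 x := by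
  simpa using (hasDerivAt_id x).ofReal_comp

lemma Leib1 (g : 𝓢(ℝ, ℂ)) : SD (SX g) = g + SX (SD g) := by
  ext x
  have h : HasDerivAt (fun t : ℝ => g t * (t : ℂ)) (deriv g x * x + g x * 1) x :=
    (g.differentiableAt.hasDerivAt).mul (hasDerivAt_coe x)
  have hx : SD (SX g) x = deriv (fun t : ℝ => g t * (t : ℂ)) x := rfl
  rw [hx, h.deriv]
  simp only [SchwartzMap.add_apply, SX_apply]
  have h1 : SD g x = deriv g x := rfl
  rw [h1]; ring

/-- prolate of a Schwartz function, as a Schwartz-space combination. -/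
noncomputable def prolateS (Λ : ℝ) (g : 𝓢(ℝ, ℂ)) : 𝓢(ℝ, ℂ) :=
  (-(Λ ^ 2 : ℂ)) • SD (SD g) + SX (SX (SD (SD g))) + (2 : ℂ) • SX (SD g)
    + (((2 * π * Λ) ^ 2 : ℝ) : ℂ) • SX (SX g)

lemma prolate_eq (Λ : ℝ) (g : 𝓢(ℝ, ℂ)) (x : ℝ) :
    prolate Λ ⇑g x = prolateS Λ g x := by
  have hc : HasDerivAt (fun t : ℝ => (((Λ ^ 2 - t ^ 2 : ℝ)) : ℂ)) (-(2 * x)) x := by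
    have h1 := (hasDerivAt_coe x).mul (hasDerivAt_coe x)
    have h2 : HasDerivAt (fun t : ℝ => ((Λ ^ 2 : ℝ) : ℂ) - (t : ℂ) * (t : ℂ)) _ x :=
      (hasDerivAt_const x ((Λ ^ 2 : ℝ) : ℂ)).sub h1
    have he : (fun t : ℝ => ((Λ ^ 2 : ℝ) : ℂ) - (t : ℂ) * (t : ℂ))
        = fun t : ℝ => (((Λ ^ 2 - t ^ 2 : ℝ)) : ℂ) := by
      ext t; push_cast; ring
    rw [he] at h2
    convert h2 using 1
    push_cast; ring
  have hdg : HasDerivAt (deriv ⇑g) (deriv (deriv ⇑g) x) x := by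
    have := (SD g).differentiableAt (x := x)
    rw [SD_coe] at this
    exact this.hasDerivAt
  have h : HasDerivAt (fun t : ℝ => (((Λ ^ 2 - t ^ 2 : ℝ)) : ℂ) * deriv (⇑g) t) _ x :=
    hc.mul hdg
  rw [prolate, h.deriv]
  simp only [prolateS, SchwartzMap.add_apply, SchwartzMap.smul_apply, SX_apply, smul_eq_mul]
  have h2 : SD (SD g) x = deriv (deriv ⇑g) x := rfl
  have h1 : SD g x = deriv ⇑g x := rfl
  rw [h2, h1]
  push_cast
  ring

lemma main (Λ : ℝ) (ψ : 𝓢(ℝ, ℂ)) : SF (prolateS Λ ψ) = prolateS Λ (SF ψ) := by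
  have hπ : (π : ℂ) ≠ 0 := Complex.ofReal_ne_zero.mpr Real.pi_ne_zero
  have hI := Complex.I_ne_zero
  have e2 : SF (SD (SD ψ)) = (2 * π * I) • ((2 * π * I) • SX (SX (SF ψ))) := by
    rw [SL1, SL1, SX_smul]
  have eXX : ∀ g : 𝓢(ℝ, ℂ), SF (SX (SX g)) =
      (-(2 * π * I))⁻¹ • ((-(2 * π * I))⁻¹ • SD (SD (SF g))) := by
    intro g
    rw [SL2, SL2]
    simp only [_root_.map_smul]
  have eXD : SF (SX (SD ψ)) = (-(2 * π * I))⁻¹ • ((2 * π * I) • SD (SX (SF ψ))) := by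
    rw [SL2, SL1]
    simp only [_root_.map_smul]
  have leib : SD (SD (SX (SX (SF ψ)))) =
      (2 : ℂ) • SF ψ + (4 : ℂ) • SX (SD (SF ψ)) + SX (SX (SD (SD (SF ψ)))) := by
    simp only [Leib1, _root_.map_add]
    module
  have leib2 : SD (SX (SF ψ)) = SF ψ + SX (SD (SF ψ)) := Leib1 _
  rw [prolateS, _root_.map_add, _root_.map_add, _root_.map_add, _root_.map_smul,
    _root_.map_smul, _root_.map_smul, e2, eXX (SD (SD ψ)), e2, eXD, eXX ψ]
  rw [prolateS]
  simp only [_root_.map_smul]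
  rw [leib, leib2]
  match_scalars <;> (try field_simp) <;> (try ring_nf) <;>
    (try simp [Complex.I_sq]) <;> (try ring_nf) <;> (try ring)

/-- `H_Λ` commutes with the Fourier transform `(Ff)(x) = ∫ f(y) e^{−2πixy} dy`
on Schwartz functions. -/
theorem prolate_comm_fourier (Λ : ℝ) (hΛ : 0 < Λ) (ψ : SchwartzMap ℝ ℂ) :
    ∀ x : ℝ, FourierTransform.fourier (prolate Λ ⇑ψ : ℝ → ℂ) x =
      prolate Λ (FourierTransform.fourier (⇑ψ : ℝ → ℂ)) x := by
  intro x
  have h1 : prolate Λ ⇑ψ = ⇑(prolateS Λ ψ) := funext (prolate_eq Λ ψ)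
  have h2 : FourierTransform.fourier ⇑ψ = ⇑(SF ψ) := rfl
  rw [h1, h2, prolate_eq Λ (SF ψ) x, ← main Λ ψ]
  rfl
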